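/- arXiv:1605.03780 — 3 statements merged into one kernel-verified Lean document; each statement's English description precedes it below -/
import Mathlib

section
/- Define, for a univariate polynomial f over ℚ(x_1,…,x_a), the type B Demazure expression ∂̃(f) = Σ_{p=1}^{a} ( f(x_p) − f(−x_p) ) / ( 2 x_p · Π_{u≠p} (x_p^2 − x_u^2) ). Then ∂̃(x^k) = 0 when k is even, and ∂̃(x^{2j+1}) = h_{j−a+1}(x_1^2,…,x_a^2) for all j ≥ 0. -/
/-!
With `w_p = ∏_{u ≠ p} (y_p - y_u)⁻¹`, the generating series of `s_j = ∑_p w_p y_p ^ j` is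
`∑_p w_p / (1 - y_p t)`. Multiplied by `∏_u (1 - y_u t)` it becomes `∑_p w_p ∏_{u ≠ p} (1 - y_u t)`,
the reversal of `∑_p (Lagrange basis)_p = 1`, i.e. `t ^ (a - 1)`. Since `1 / ∏_u (1 - y_u t)` is the
generating series of the `h_m(y)`, this gives `s_j = h_{j - a + 1}(y)`. For `y_p = x_p²` the odd
part of the Demazure numerator, `2 x_p ^ (2j+1)`, cancels against `2 x_p` and leaves `s_j`.
-/

open MvPolynomial

/-- The images of the variables `x_1, …, x_a` in the field of rational
functions `ℚ(x_1,…,x_a)`. -/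
noncomputable def xv (N : ℕ) (i : Fin N) : FractionRing (MvPolynomial (Fin N) ℚ) :=
  algebraMap (MvPolynomial (Fin N) ℚ) (FractionRing (MvPolynomial (Fin N) ℚ)) (X i)

/-- The type B Demazure expression
`∂̃(f) = ∑_{p=1}^{a} (f(x_p) − f(−x_p)) / (2 x_p ∏_{u≠p} (x_p² − x_u²))`
for a univariate polynomial `f` over `ℚ(x_1,…,x_a)`. -/
noncomputable def Dtilde (a : ℕ) (f : Polynomial (FractionRing (MvPolynomial (Fin a) ℚ))) :
    FractionRing (MvPolynomial (Fin a) ℚ) :=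
  ∑ p : Fin a,
    (f.eval (xv a p) - f.eval (-(xv a p))) /
      (2 * xv a p * ∏ u ∈ Finset.univ.erase p, ((xv a p) ^ 2 - (xv a u) ^ 2))

namespace Polynomial

theorem reflect_one_X_sub_C {R : Type*} [Ring R] (c : R) :
    reflect 1 (X - C c) = 1 - C c * X := by
  rw [reflect_sub, reflect_one_X, reflect_C, pow_one]

theorem reflect_sum {R ι : Type*} [Ring R] (N : ℕ) (s : Finset ι) (f : ι → R[X]) :
    reflect N (∑ i ∈ s, f i) = ∑ i ∈ s, reflect N (f i) :=
  map_sum (AddMonoidHom.mk' (reflect N) fun f g => reflect_add f g N) f s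

theorem reflect_prod_X_sub_C {R ι : Type*} [CommRing R] (s : Finset ι) (v : ι → R) :
    reflect s.card (∏ i ∈ s, (X - C (v i))) = ∏ i ∈ s, (1 - C (v i) * X) := by
  classical
  nontriviality R
  induction s using Finset.induction_on with
  | empty => simp [reflect_one]
  | insert i s hi ih =>
    rw [Finset.card_insert_of_notMem hi, Finset.prod_insert hi, Finset.prod_insert hi, add_comm,
      reflect_mul _ _ (natDegree_X_sub_C_le _) ((natDegree_prod_le _ _).trans (by simp)),
      reflect_one_X_sub_C, ih]

end Polynomial

open Polynomial in
/-- The reflection of `∑ i ∈ s, Lagrange.basis s v i = 1`. -/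
theorem Lagrange.sum_C_nodalWeight_mul_prod_one_sub {F ι : Type*} [Field F] [DecidableEq ι]
    {s : Finset ι} {v : ι → F} (hvs : Set.InjOn v s) (hs : s.Nonempty) :
    ∑ i ∈ s, Polynomial.C (nodalWeight s v i) *
        ∏ j ∈ s.erase i, (1 - Polynomial.C (v j) * Polynomial.X) =
      Polynomial.X ^ (s.card - 1) := by
  have h := congrArg (reflect (s.card - 1)) (sum_basis hvs hs)
  rw [reflect_one, reflect_sum] at h
  rw [← h]
  refine Finset.sum_congr rfl fun i hi => ?_
  rw [basis_eq_prod_sub_inv_mul_nodal_div hi, ← nodal_erase_eq_nodal_div hi, reflect_C_mul,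
    ← Finset.card_erase_of_mem hi, nodal, reflect_prod_X_sub_C]

theorem MvPolynomial.aeval_hsymm {σ R S : Type*} [CommSemiring R] [CommSemiring S] [Algebra R S]
    [Fintype σ] [DecidableEq σ] (y : σ → S) (n : ℕ) :
    aeval y (hsymm σ R n) = ∑ l ∈ Finset.univ.finsuppAntidiag n, ∏ i, y i ^ l i := by
  rw [hsymm, map_sum]
  refine Finset.sum_bij' (fun s _ => Multiset.toFinsupp (s : Multiset σ))
    (fun l hl => ⟨Finsupp.toMultiset l, by
      rw [Finsupp.card_toMultiset, Finsupp.sum_fintype _ _ fun _ => rfl]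
      exact (Finset.mem_finsuppAntidiag.mp hl).1⟩)
    (fun s _ => ?_) (fun _ _ => Finset.mem_univ _) (fun s _ => Subtype.ext (by simp))
    (fun l _ => by simp) (fun s _ => ?_)
  · have h := Finsupp.card_toMultiset (Multiset.toFinsupp (s : Multiset σ))
    rw [Finsupp.sum_fintype _ _ fun _ => rfl, Multiset.toFinsupp_toMultiset, Sym.card_coe] at h
    exact Finset.mem_finsuppAntidiag.mpr ⟨h.symm, Finset.subset_univ _⟩
  · simp only [map_multiset_prod, Multiset.map_map, Function.comp_def, aeval_X,
      Multiset.toFinsupp_apply]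
    rw [Finset.prod_multiset_map_count]
    exact Finset.prod_subset (Finset.subset_univ _) fun i _ hi => by
      rw [Multiset.count_eq_zero.mpr (by simpa using hi), pow_zero]

namespace PowerSeries

variable {ι R : Type*} [Fintype ι] [DecidableEq ι] [CommSemiring R]

theorem one_sub_C_mul_X_mul_mk_pow {S : Type*} [CommRing S] (c : S) :
    (1 - C c * X) * mk (fun n => c ^ n) = 1 := by
  have h := congrArg (rescale c) (mk_one_mul_one_sub_eq_one S)
  rw [map_mul, rescale_mk, map_sub, map_one, rescale_X] at h
  simpa [mul_comm] using h

theorem mk_aeval_hsymm {S : Type*} [CommSemiring S] [Algebra R S] (y : ι → S) :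
    mk (fun n => MvPolynomial.aeval y (hsymm ι R n)) = ∏ i, mk (fun n => y i ^ n) := by
  ext n
  simp [coeff_prod, MvPolynomial.aeval_hsymm]

theorem prod_one_sub_C_mul_X_mul_mk_aeval_hsymm {S : Type*} [CommRing S] [Algebra R S]
    (y : ι → S) :
    (∏ i, (1 - C (y i) * X)) * mk (fun n => MvPolynomial.aeval y (hsymm ι R n)) = 1 := by
  rw [mk_aeval_hsymm, ← Finset.prod_mul_distrib]
  exact Finset.prod_eq_one fun i _ => one_sub_C_mul_X_mul_mk_pow (y i)

variable {F : Type*} [Field F] [Nonempty ι] {y : ι → F}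

theorem prod_one_sub_C_mul_X_mul_mk_sum_nodalWeight_mul_pow (hy : Function.Injective y) :
    (∏ i, (1 - C (y i) * X)) *
        mk (fun j => ∑ p, Lagrange.nodalWeight Finset.univ y p * y p ^ j) =
      X ^ (Fintype.card ι - 1) := by
  have hpoly := congrArg Polynomial.coeToPowerSeries.ringHom
    (Lagrange.sum_C_nodalWeight_mul_prod_one_sub hy.injOn Finset.univ_nonempty)
  simp only [map_sum, map_mul, map_prod, map_sub, map_one, map_pow,
    Polynomial.coeToPowerSeries.ringHom_apply, Polynomial.coe_C, Polynomial.coe_X,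
    Finset.card_univ] at hpoly
  have hsum : mk (fun j => ∑ p, Lagrange.nodalWeight Finset.univ y p * y p ^ j) =
      ∑ p, C (Lagrange.nodalWeight Finset.univ y p) * mk fun n => y p ^ n := by
    ext n
    simp [map_sum]
  rw [hsum, Finset.mul_sum, ← hpoly]
  refine Finset.sum_congr rfl fun p _ => ?_
  rw [← Finset.mul_prod_erase Finset.univ _ (Finset.mem_univ p)]
  linear_combination
    (C (Lagrange.nodalWeight Finset.univ y p) * ∏ u ∈ Finset.univ.erase p, (1 - C (y u) * X)) *
      one_sub_C_mul_X_mul_mk_pow (y p)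

theorem mk_sum_nodalWeight_mul_pow [Algebra R F] (hy : Function.Injective y) :
    mk (fun j => ∑ p, Lagrange.nodalWeight Finset.univ y p * y p ^ j) =
      X ^ (Fintype.card ι - 1) * mk (fun n => MvPolynomial.aeval y (hsymm ι R n)) := by
  rw [← prod_one_sub_C_mul_X_mul_mk_sum_nodalWeight_mul_pow hy, mul_right_comm,
    prod_one_sub_C_mul_X_mul_mk_aeval_hsymm, one_mul]

end PowerSeries

theorem Lagrange.sum_nodalWeight_mul_pow {ι R F : Type*} [Fintype ι] [DecidableEq ι] [Nonempty ι]
    [CommSemiring R] [Field F] [Algebra R F] {y : ι → F} (hy : Function.Injective y) (j : ℕ) :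
    ∑ p, nodalWeight Finset.univ y p * y p ^ j =
      if Fintype.card ι - 1 ≤ j then aeval y (hsymm ι R (j - (Fintype.card ι - 1))) else 0 := by
  simpa [PowerSeries.coeff_X_pow_mul', apply_ite] using
    congrArg (PowerSeries.coeff j) (PowerSeries.mk_sum_nodalWeight_mul_pow (R := R) hy)

theorem odd_pow_sub_neg_pow_div_two_mul {K : Type*} [Field K] [NeZero (2 : K)] {x : K} (hx : x ≠ 0)
    (j : ℕ) (D : K) : (x ^ (2 * j + 1) - (-x) ^ (2 * j + 1)) / (2 * x * D) = D⁻¹ * (x ^ 2) ^ j := by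
  rw [(odd_two_mul_add_one j).neg_pow, pow_succ, ← pow_mul]
  field_simp
  ring

theorem xv_ne_zero (a : ℕ) (p : Fin a) : xv a p ≠ 0 :=
  (map_ne_zero_iff _ (IsFractionRing.injective _ _)).mpr (X_ne_zero p)

theorem xv_sq_injective (a : ℕ) : Function.Injective fun p => xv a p ^ 2 := by
  intro p u h
  simp only [xv, ← map_pow] at h
  have h' := IsFractionRing.injective (MvPolynomial (Fin a) ℚ) _ h
  rw [X_pow_eq_monomial, X_pow_eq_monomial, monomial_left_inj one_ne_zero] at h'
  exact Finsupp.single_left_injective two_ne_zero h'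

theorem Dtilde_X_pow_of_even (a : ℕ) {k : ℕ} (hk : Even k) : Dtilde a (Polynomial.X ^ k) = 0 :=
  Finset.sum_eq_zero fun p _ => by simp [hk.neg_pow]

theorem Dtilde_X_pow_odd (a j : ℕ) :
    Dtilde a (Polynomial.X ^ (2 * j + 1)) =
      ∑ p, Lagrange.nodalWeight Finset.univ (fun p => xv a p ^ 2) p * (xv a p ^ 2) ^ j := by
  refine Finset.sum_congr rfl fun p _ => ?_
  rw [Polynomial.eval_pow, Polynomial.eval_pow, Polynomial.eval_X, Polynomial.eval_X,
    odd_pow_sub_neg_pow_div_two_mul (xv_ne_zero a p), Lagrange.nodalWeight, Finset.prod_inv_distrib]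

theorem algebraMap_aeval_X_sq (a : ℕ) (f : MvPolynomial (Fin a) ℚ) :
    algebraMap (MvPolynomial (Fin a) ℚ) (FractionRing (MvPolynomial (Fin a) ℚ))
      (aeval (fun i => X i ^ 2) f) = aeval (fun i => xv a i ^ 2) f := by
  rw [← IsScalarTower.coe_toAlgHom' ℚ, comp_aeval_apply]
  simp [xv]

/-- `∂̃(x^k) = 0` when `k` is even, and `∂̃(x^{2j+1}) = h_{j−a+1}(x_1²,…,x_a²)`
for all `j ≥ 0` (with `h_i = 0` for `i < 0`). -/
theorem typeB_demazure_on_monomials (a : ℕ) (ha : 1 ≤ a) :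
    (∀ k : ℕ, Even k → Dtilde a (Polynomial.X ^ k) = 0) ∧
    (∀ j : ℕ,
      Dtilde a (Polynomial.X ^ (2 * j + 1)) =
        if j < a - 1 then 0
        else
          algebraMap (MvPolynomial (Fin a) ℚ) (FractionRing (MvPolynomial (Fin a) ℚ))
            ((aeval fun i : Fin a => (X i : MvPolynomial (Fin a) ℚ) ^ 2)
              (hsymm (Fin a) ℚ (j - (a - 1))))) := by
  refine ⟨fun k hk => Dtilde_X_pow_of_even a hk, fun j => ?_⟩
  have : Nonempty (Fin a) := ⟨⟨0, ha⟩⟩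
  rw [Dtilde_X_pow_odd, Lagrange.sum_nodalWeight_mul_pow (R := ℚ) (xv_sq_injective a),
    Fintype.card_fin, algebraMap_aeval_X_sq]
  simp only [← not_le, ite_not]
end

section
/- In the field ℚ(x_0,…,x_n), for all integers 0 ≤ j, s ≤ n one has Σ_{p=0}^{n} x_p^{n−j} · (−1)^s e_s(x_0,…,x̂_p,…,x_n) / Π_{u≠p} (x_p − x_u) = δ_{j,s}. That is, the families {x_0^{n−j}}_{j=0}^{n} and {(−1)^s e_s(x_1,…,x_n)}_{s=0}^{n} are dual bases with respect to the Frobenius form given by the Lagrange/Demazure symmetrization. -/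
open MvPolynomial

/-- In `ℚ(x_0,…,x_n)`, for all `0 ≤ j, s ≤ n`:
`∑_{p} x_p^{n−j} (−1)^s e_s(x_0,…,x̂_p,…,x_n) / ∏_{u≠p} (x_p − x_u) = δ_{j,s}`,
i.e. the powers of `x_0` and the signed elementary symmetric polynomials in the
remaining variables are dual bases for the Lagrange/Demazure symmetrization form. -/
theorem dual_bases_for_demazure_form (n j s : ℕ) (hj : j ≤ n) (hs : s ≤ n) :
    ∑ p : Fin (n + 1),
        (xv (n + 1) p) ^ (n - j) * (-1 : FractionRing (MvPolynomial (Fin (n + 1)) ℚ)) ^ s *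
            (∑ T ∈ (Finset.univ.erase p).powersetCard s, ∏ u ∈ T, xv (n + 1) u) /
          ∏ u ∈ Finset.univ.erase p, (xv (n + 1) p - xv (n + 1) u)
      = if j = s then 1 else 0 := by
  classical
  set F := FractionRing (MvPolynomial (Fin (n + 1)) ℚ)
  set v : Fin (n + 1) → F := xv (n + 1) with hv
  have hinj : Function.Injective v := by
    intro a b h
    exact MvPolynomial.X_injective
      (IsFractionRing.injective (MvPolynomial (Fin (n + 1)) ℚ) F h)
  have hvs : Set.InjOn v (Finset.univ : Finset (Fin (n + 1))) := hinj.injOn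
  have hdeg : (Polynomial.X ^ (n - j) : Polynomial F).degree <
      (Finset.univ : Finset (Fin (n + 1))).card := by
    rw [Polynomial.degree_X_pow]
    simp only [Finset.card_univ, Fintype.card_fin]
    exact_mod_cast Nat.lt_succ_of_le (Nat.sub_le n j)
  have key := Lagrange.eq_interpolate (f := (Polynomial.X ^ (n - j) : Polynomial F)) hvs hdeg
  have hcoeff := congrArg (fun P => Polynomial.coeff P (n - s)) key
  simp only [Lagrange.interpolate_apply, Polynomial.finset_sum_coeff] at hcoeff
  -- compute coeff of each summand
  have hterm : ∀ p : Fin (n + 1),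
      (Polynomial.C ((Polynomial.X ^ (n - j) : Polynomial F).eval (v p)) *
        Lagrange.basis Finset.univ v p).coeff (n - s)
      = v p ^ (n - j) * (-1 : F) ^ s *
            (∑ T ∈ (Finset.univ.erase p).powersetCard s, ∏ u ∈ T, v u) /
          ∏ u ∈ Finset.univ.erase p, (v p - v u) := by
    intro p
    have hcard : (Finset.univ.erase p).card = n := by
      simp [Finset.card_erase_of_mem]
    have hns : n - s ≤ (Finset.univ.erase p).card := by omega
    rw [Lagrange.basis]
    have hb : ∏ u ∈ Finset.univ.erase p, Lagrange.basisDivisor (v p) (v u)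
        = Polynomial.C ((∏ u ∈ Finset.univ.erase p, (v p - v u))⁻¹) *
          ∏ u ∈ Finset.univ.erase p, (Polynomial.X + Polynomial.C (-(v u))) := by
      unfold Lagrange.basisDivisor
      rw [Finset.prod_mul_distrib, ← map_prod, ← Finset.prod_inv_distrib]
      congr 1
      exact Finset.prod_congr rfl fun u _ => by rw [map_neg]; ring
    rw [hb, ← mul_assoc, ← Polynomial.C_mul, Polynomial.coeff_C_mul,
      Finset.prod_X_add_C_coeff _ _ hns]
    have hcs : (Finset.univ.erase p).card - (n - s) = s := by omega
    rw [hcs]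
    have hneg : ∑ T ∈ (Finset.univ.erase p).powersetCard s, ∏ u ∈ T, -(v u)
        = (-1 : F) ^ s * ∑ T ∈ (Finset.univ.erase p).powersetCard s, ∏ u ∈ T, v u := by
      rw [Finset.mul_sum]
      refine Finset.sum_congr rfl fun T hT => ?_
      have hTc : T.card = s := (Finset.mem_powersetCard.mp hT).2
      calc ∏ u ∈ T, -(v u) = ∏ u ∈ T, (-1 : F) * v u := by
              exact Finset.prod_congr rfl fun u _ => (neg_one_mul _).symm
          _ = (-1 : F) ^ s * ∏ u ∈ T, v u := by
              rw [Finset.prod_mul_distrib, Finset.prod_const, hTc]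
    rw [hneg, Polynomial.eval_pow, Polynomial.eval_X, div_eq_mul_inv]
    ring
  rw [Finset.sum_congr rfl fun p _ => hterm p] at hcoeff
  rw [← hcoeff, Polynomial.coeff_X_pow]
  have : (n - s = n - j) ↔ (j = s) := by omega
  simp [this, eq_comm]
end

section
/- Fix r ≥ m ≥ 1. Let 𝐨 = (0, 1, …, m−1, m, m, …, m) ∈ ℤ^r and let 𝐚 = (a_1, …, a_r) satisfy 0 ≤ a_1 < a_2 < ⋯ < a_p = m = a_{p+1} = ⋯ = a_r for some p ≤ r. Then there is a finite sequence of indices i_1, …, i_N ∈ {1,…,r} and sequences 𝐚^{(0)} = 𝐨, 𝐚^{(k)} obtained from 𝐚^{(k−1)} by increasing the i_k-th coordinate by 1, with 𝐚^{(N)} = 𝐚, such that every 𝐚^{(k)} is weakly increasing with values in [0,m], and for every k one has −a^{(k)}_{i_k−1} + 2a^{(k)}_{i_k} − a^{(k)}_{i_k+1} ≥ 1 (with the conventions a^{(k)}_0 := −a^{(k)}_1 and a^{(k)}_{r+1} := m). -/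
/-- The extension of a sequence `b : Fin r → ℤ` (indexed `b₁,…,b_r` by
`t = 1,…,r`) using the conventions `b₀ := −b₁` and `b_{r+1} := m`. -/
def extS (r m : ℕ) (b : Fin r → ℤ) : ℕ → ℤ := fun t =>
  if h : 1 ≤ t ∧ t ≤ r then b ⟨t - 1, by omega⟩
  else if t = 0 then (if h0 : 0 < r then -b ⟨0, h0⟩ else 0) else (m : ℤ)

/-- Extension of `b` by `m` to the right (0-indexed). -/
def extC (r m : ℕ) (b : Fin r → ℤ) : ℕ → ℤ := fun t =>
  if h : t < r then b ⟨t, h⟩ else (m : ℤ)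

lemma extS_succ (r m : ℕ) (b : Fin r → ℤ) (t : ℕ) :
    extS r m b (t + 1) = extC r m b t := by
  unfold extS extC
  by_cases h : t < r
  · rw [dif_pos (show 1 ≤ t + 1 ∧ t + 1 ≤ r by omega), dif_pos h]
    exact congrArg b (Fin.ext (by simp))
  · rw [dif_neg (by omega), if_neg (by omega), dif_neg h]

lemma extS_zero (r m : ℕ) (b : Fin r → ℤ) (hr : 0 < r) :
    extS r m b 0 = -b ⟨0, hr⟩ := by
  unfold extS
  rw [dif_neg (by omega), if_pos rfl, dif_pos hr]

lemma extC_mono (r m : ℕ) (b : Fin r → ℤ) (hmono : Monotone b)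
    (hub : ∀ i, b i ≤ (m : ℤ)) {t s : ℕ} (hts : t ≤ s) :
    extC r m b t ≤ extC r m b s := by
  unfold extC
  by_cases ht : t < r
  · by_cases hs : s < r
    · rw [dif_pos ht, dif_pos hs]
      exact hmono (show (⟨t, ht⟩ : Fin r) ≤ ⟨s, hs⟩ from hts)
    · rw [dif_pos ht, dif_neg hs]; exact hub _
  · rw [dif_neg ht, dif_neg (by omega)]

lemma exists_step (r m : ℕ) (hrm : m ≤ r) (b : Fin r → ℤ)
    (hmono : Monotone b)
    (hlb : ∀ i : Fin r, ((min (i : ℕ) m : ℕ) : ℤ) ≤ b i)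
    (hub : ∀ i, b i ≤ (m : ℤ))
    (hne : ∃ i : Fin r, b i ≠ ((min (i : ℕ) m : ℕ) : ℤ)) :
    ∃ i : Fin r,
      ((min (i : ℕ) m : ℕ) : ℤ) + 1 ≤ b i ∧
      (∀ j : Fin r, (j : ℕ) < (i : ℕ) → b j < b i) ∧
      extC r m b ((i : ℕ) + 1) = b i := by
  set c : ℕ → ℤ := extC r m b with hc
  have hcb : ∀ (t : ℕ) (h : t < r), c t = b ⟨t, h⟩ := fun t h => dif_pos h
  have hcb' : ∀ j : Fin r, c (j : ℕ) = b j := by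
    intro j
    rw [hcb (j : ℕ) j.2]
  have hcm : ∀ t : ℕ, r ≤ t → c t = (m : ℤ) := fun t h => dif_neg (by omega)
  have hcmono : ∀ {t s : ℕ}, t ≤ s → c t ≤ c s := fun h => extC_mono r m b hmono hub h
  have hcub : ∀ t, c t ≤ (m : ℤ) := by
    intro t
    by_cases h : t < r
    · rw [hcb t h]; exact hub _
    · rw [hcm t (by omega)]
  -- minimal index where b exceeds the minimal sequence
  have hP : ∃ t : ℕ, t < r ∧ ((min t m : ℕ) : ℤ) + 1 ≤ c t := by
    obtain ⟨i, hi⟩ := hne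
    refine ⟨(i : ℕ), i.2, ?_⟩
    rw [hcb']
    have := hlb i
    omega
  classical
  obtain ⟨hi0r, hi0⟩ := Nat.find_spec hP
  set i0 := Nat.find hP with hi0def
  have hi0min : ∀ t < i0, t < r → c t ≤ ((min t m : ℕ) : ℤ) := by
    intro t ht htr
    have h1 := Nat.find_min hP ht
    push_neg at h1
    have := h1 htr
    omega
  have hi0m : i0 < m := by
    have := hcub i0
    omega
  -- growth lemma
  have growth : ∀ k : ℕ, (∀ t, i0 ≤ t → t < i0 + k → c t < c (t + 1)) →
      c i0 + k ≤ c (i0 + k) := by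
    intro k
    induction k with
    | zero => intro _; simp
    | succ k ih =>
      intro h
      have h1 : c i0 + k ≤ c (i0 + k) := ih (fun t h1 h2 => h t h1 (by omega))
      have h2 : c (i0 + k) < c (i0 + k + 1) := h _ (by omega) (by omega)
      have h3 : i0 + (k + 1) = (i0 + k) + 1 := by omega
      rw [h3]
      push_cast
      omega
  -- there is a flat spot at or after i0
  have hflat : ∃ t : ℕ, i0 ≤ t ∧ t < r ∧ c (t + 1) ≤ c t := by
    by_contra hcon
    push_neg at hcon
    have := growth (r - i0) (by
      intro t h1 h2
      exact hcon t h1 (by omega))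
    rw [show i0 + (r - i0) = r by omega, hcm r le_rfl] at this
    omega
  obtain ⟨hii0, hir, hiflat⟩ := Nat.find_spec hflat
  set i := Nat.find hflat with hidef
  have himin : ∀ t, i0 ≤ t → t < i → c t < c (t + 1) := by
    intro t h1 h2
    have h3 := Nat.find_min hflat h2
    push_neg at h3
    by_cases htr : t < r
    · exact h3 h1 htr
    · exfalso; omega
  have hgrow : c i0 + ((i - i0 : ℕ) : ℤ) ≤ c i := by
    have := growth (i - i0) (fun t h1 h2 => himin t h1 (by omega))
    rwa [show i0 + (i - i0) = i by omega] at this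
  have hci : ((i : ℕ) : ℤ) + 1 ≤ c i := by omega
  refine ⟨⟨i, hir⟩, ?_, ?_, ?_⟩
  · rw [← hcb i hir]
    simp only [Fin.val_mk]
    omega
  · intro j hj
    simp only [Fin.val_mk] at hj
    rw [← hcb i hir, ← hcb' j]
    by_cases hji0 : (j : ℕ) < i0
    · have h1 := hi0min j hji0 j.2
      omega
    · have h1 : c (j : ℕ) < c ((j : ℕ) + 1) := himin _ (by omega) hj
      have h2 : c ((j : ℕ) + 1) ≤ c i := hcmono (by omega)
      omega
  · rw [← hcb i hir]
    simp only [Fin.val_mk]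
    have h1 : c i ≤ c (i + 1) := hcmono (by omega)
    have h2 : c (i + 1) ≤ c i := hiflat
    show c (i + 1) = c i
    omega

lemma path_aux (r m : ℕ) (hrm : m ≤ r) :
    ∀ n : ℕ, ∀ b : Fin r → ℤ, Monotone b →
    (∀ i : Fin r, ((min (i : ℕ) m : ℕ) : ℤ) ≤ b i) → (∀ i, b i ≤ (m : ℤ)) →
    (∑ i, (b i - ((min (i : ℕ) m : ℕ) : ℤ))) ≤ (n : ℤ) →
    ∃ (N : ℕ) (idx : Fin N → Fin r) (seq : Fin (N + 1) → Fin r → ℤ),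
      seq 0 = (fun i : Fin r => (min (i : ℕ) m : ℤ)) ∧
      seq (Fin.last N) = b ∧
      (∀ k : Fin N, seq k.succ =
        Function.update (seq k.castSucc) (idx k) (seq k.castSucc (idx k) + 1)) ∧
      (∀ k : Fin (N + 1), Monotone (seq k) ∧ ∀ i, 0 ≤ seq k i ∧ seq k i ≤ (m : ℤ)) ∧
      (∀ k : Fin N,
        1 ≤ -extS r m (seq k.succ) (idx k : ℕ) + 2 * extS r m (seq k.succ) ((idx k : ℕ) + 1)
            - extS r m (seq k.succ) ((idx k : ℕ) + 2)) := by
  intro n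
  induction n with
  | zero =>
    intro b hmono hlb hub hsum
    have hb : ∀ i : Fin r, b i = ((min (i : ℕ) m : ℕ) : ℤ) := by
      by_contra hcon
      push_neg at hcon
      obtain ⟨i, hi⟩ := hcon
      have hpos : (0 : ℤ) < ∑ j, (b j - ((min (j : ℕ) m : ℕ) : ℤ)) := by
        apply Finset.sum_pos' (fun j _ => by have := hlb j; omega)
        exact ⟨i, Finset.mem_univ i, by have := hlb i; omega⟩
      rw [Nat.cast_zero] at hsum
      omega
    refine ⟨0, Fin.elim0, fun _ => b, ?_, rfl, fun k => k.elim0, ?_, fun k => k.elim0⟩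
    · funext x
      show b x = _
      rw [hb x]
      push_cast
      rfl
    · intro k
      refine ⟨hmono, fun i => ⟨?_, hub i⟩⟩
      show (0 : ℤ) ≤ b i
      have := hlb i
      omega
  | succ n ih =>
    intro b hmono hlb hub hsum
    by_cases hb : ∀ i : Fin r, b i = ((min (i : ℕ) m : ℕ) : ℤ)
    · refine ⟨0, Fin.elim0, fun _ => b, ?_, rfl, fun k => k.elim0, ?_, fun k => k.elim0⟩
      · funext x
        show b x = _
        rw [hb x]
        push_cast
        rfl
      · intro k
        refine ⟨hmono, fun i => ⟨?_, hub i⟩⟩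
        show (0 : ℤ) ≤ b i
        have := hlb i
        omega
    push_neg at hb
    obtain ⟨i, hi1, hi2, hi3⟩ := exists_step r m hrm b hmono hlb hub hb
    set b' : Fin r → ℤ := Function.update b i (b i - 1) with hb'def
    have hb'app : ∀ j : Fin r, b' j = if j = i then b i - 1 else b j := by
      intro j; rw [hb'def, Function.update_apply]
    have hb'i : b' i = b i - 1 := by rw [hb'app]; simp
    have hb'mono : Monotone b' := by
      intro j k hjk
      rw [hb'app, hb'app]
      by_cases hji : j = i <;> by_cases hki : k = i
    
      · subst hji; subst hki; simp
      · simp only [if_pos hji, if_neg hki]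
        subst hji
        have : b j ≤ b k := hmono hjk
        omega
      · simp only [if_neg hji, if_pos hki]
        subst hki
        have hlt : j < k := lt_of_le_of_ne hjk hji
        have := hi2 j hlt
        omega
      · simp only [if_neg hji, if_neg hki]
        exact hmono hjk
    have hb'lb : ∀ j : Fin r, ((min (j : ℕ) m : ℕ) : ℤ) ≤ b' j := by
      intro j
      rw [hb'app]
      by_cases hji : j = i
      · subst hji; rw [if_pos rfl]; omega
      · rw [if_neg hji]; exact hlb j
    have hb'ub : ∀ j, b' j ≤ (m : ℤ) := by
      intro j
      rw [hb'app]
      by_cases hji : j = i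
      · rw [if_pos hji]; have := hub i; omega
      · rw [if_neg hji]; exact hub j
    have hb'sum : (∑ j, (b' j - ((min (j : ℕ) m : ℕ) : ℤ))) ≤ (n : ℤ) := by
      have heq : ∀ j : Fin r, b' j - ((min (j : ℕ) m : ℕ) : ℤ) =
          (b j - ((min (j : ℕ) m : ℕ) : ℤ)) - (if j = i then 1 else 0) := by
        intro j
        rw [hb'app]
        by_cases hji : j = i
        · rw [if_pos hji, if_pos hji, hji]; ring
        · rw [if_neg hji, if_neg hji]; ring
      rw [Finset.sum_congr rfl (fun j _ => heq j), Finset.sum_sub_distrib,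
        Finset.sum_ite_eq' Finset.univ i (fun _ => (1 : ℤ))]
      simp only [Finset.mem_univ, if_pos]
      push_cast at hsum ⊢
      omega
    obtain ⟨N, idx, seq, hs0, hslast, hstep, hgood, hineq⟩ :=
      ih b' hb'mono hb'lb hb'ub hb'sum
    refine ⟨N + 1, Fin.snoc idx i, Fin.snoc seq b, ?_, ?_, ?_, ?_, ?_⟩
    · rw [show (0 : Fin (N + 1 + 1)) = Fin.castSucc 0 from (Fin.castSucc_zero).symm,
        Fin.snoc_castSucc]
      exact hs0
    · exact Fin.snoc_last _ _
    · intro k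
      induction k using Fin.lastCases with
      | last =>
        rw [Fin.succ_last, Fin.snoc_last, Fin.snoc_last, Fin.snoc_castSucc, hslast]
        funext j
        rw [Function.update_apply]
        by_cases hji : j = i
        · rw [if_pos hji, hb'i, hji]; ring
        · rw [if_neg hji, hb'app, if_neg hji]
      | cast j =>
        simp only [Fin.succ_castSucc, Fin.snoc_castSucc]
        exact hstep j
    · intro k
      induction k using Fin.lastCases with
      | last =>
        rw [Fin.snoc_last]
        refine ⟨hmono, fun j => ⟨?_, hub j⟩⟩
        have := hlb j
        omega
      | cast j =>
        rw [Fin.snoc_castSucc]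
        exact hgood j
    · intro k
      induction k using Fin.lastCases with
      | last =>
        rw [Fin.succ_last, Fin.snoc_last, Fin.snoc_last]
        have e1 : extS r m b ((i : ℕ) + 1) = b i := by
          rw [extS_succ]
          unfold extC
          rw [dif_pos i.2]
        have e2 : extS r m b ((i : ℕ) + 2) = b i := by
          rw [show (i : ℕ) + 2 = ((i : ℕ) + 1) + 1 from rfl, extS_succ]
          exact hi3
        by_cases h0 : (i : ℕ) = 0
        · have e0 : extS r m b (i : ℕ) = -b i := by
            rw [h0, extS_zero r m b i.pos]
            exact congrArg Neg.neg (congrArg b (Fin.ext h0.symm))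
          rw [e0, e1, e2]
          omega
        · have e0 : extS r m b (i : ℕ) = b ⟨(i : ℕ) - 1, by omega⟩ := by
            have h' := extS_succ r m b ((i : ℕ) - 1)
            rw [show ((i : ℕ) - 1) + 1 = (i : ℕ) by omega] at h'
            rw [h']
            unfold extC
            rw [dif_pos (show (i : ℕ) - 1 < r by omega)]
          rw [e0, e1, e2]
          have := hi2 ⟨(i : ℕ) - 1, by omega⟩ (Nat.sub_lt (by omega) one_pos)
          omega
      | cast j =>
        simp only [Fin.succ_castSucc, Fin.snoc_castSucc]
        exact hineq j

/-- Fix `r ≥ m ≥ 1` and let `𝐨 = (0,1,…,m−1,m,…,m)`.  If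
`0 ≤ a₁ < a₂ < ⋯ < a_p = m = a_{p+1} = ⋯ = a_r` for some `p`, then there is a
path from `𝐨` to `a` in which each step increases one coordinate by `1`, every
intermediate sequence is weakly increasing with values in `[0,m]`, and after each
step one has `−a^{(k)}_{i_k−1} + 2a^{(k)}_{i_k} − a^{(k)}_{i_k+1} ≥ 1` (with
`a₀ := −a₁`, `a_{r+1} := m`). -/
theorem path_from_minimal_sequence (r m : ℕ) (hm : 1 ≤ m) (hrm : m ≤ r)
    (a : Fin r → ℤ)
    (ha : ∃ p : ℕ, 1 ≤ p ∧ p ≤ r ∧ (∀ i, 0 ≤ a i) ∧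
      (∀ i j : Fin r, (i : ℕ) < (j : ℕ) → (j : ℕ) + 1 ≤ p → a i < a j) ∧
      (∀ i : Fin r, p ≤ (i : ℕ) + 1 → a i = (m : ℤ))) :
    ∃ (N : ℕ) (idx : Fin N → Fin r) (seq : Fin (N + 1) → Fin r → ℤ),
      seq 0 = (fun i : Fin r => (min (i : ℕ) m : ℤ)) ∧
      seq (Fin.last N) = a ∧
      (∀ k : Fin N, seq k.succ =
        Function.update (seq k.castSucc) (idx k) (seq k.castSucc (idx k) + 1)) ∧
      (∀ k : Fin (N + 1), Monotone (seq k) ∧ ∀ i, 0 ≤ seq k i ∧ seq k i ≤ (m : ℤ)) ∧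
      (∀ k : Fin N,
        1 ≤ -extS r m (seq k.succ) (idx k : ℕ) + 2 * extS r m (seq k.succ) ((idx k : ℕ) + 1)
            - extS r m (seq k.succ) ((idx k : ℕ) + 2)) := by
  obtain ⟨p, hp1, hpr, h0, hstrict, htop⟩ := ha
  -- upper bound
  have hub : ∀ i, a i ≤ (m : ℤ) := by
    intro i
    by_cases hpi : p ≤ (i : ℕ) + 1
    · exact le_of_eq (htop i hpi)
    · have hlt : (i : ℕ) + 1 < p := by omega
      have hpm1 : p - 1 < r := by omega
      have h1 : a i < a ⟨p - 1, hpm1⟩ := hstrict i ⟨p - 1, hpm1⟩ (by simp; omega) (by simp; omega)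
      have h2 : a ⟨p - 1, hpm1⟩ = (m : ℤ) := htop ⟨p - 1, hpm1⟩ (by simp; omega)
      omega
  -- lower bound for small indices
  have hlbnat : ∀ t : ℕ, ∀ h : t < r, t + 1 ≤ p → (t : ℤ) ≤ a ⟨t, h⟩ := by
    intro t
    induction t with
    | zero => intro h _; exact_mod_cast h0 _
    | succ t iht =>
      intro h hp
      have h1 : (t : ℤ) ≤ a ⟨t, by omega⟩ := iht (by omega) (by omega)
      have h2 : a ⟨t, by omega⟩ < a ⟨t + 1, h⟩ := hstrict _ _ (by simp) (by simp; omega)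
      push_cast
      omega
  have hlb : ∀ i : Fin r, ((min (i : ℕ) m : ℕ) : ℤ) ≤ a i := by
    intro i
    by_cases hpi : p ≤ (i : ℕ) + 1
    · rw [htop i hpi]
      have : min (i : ℕ) m ≤ m := min_le_right _ _
      omega
    · have h1 : ((i : ℕ) : ℤ) ≤ a i := by
        have := hlbnat (i : ℕ) i.2 (by omega)
        rwa [Fin.eta] at this
      have : min (i : ℕ) m ≤ (i : ℕ) := min_le_left _ _
      omega
  -- monotone
  have hmono : Monotone a := by
    intro i j hij
    by_cases hij' : (i : ℕ) = (j : ℕ)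
    · rw [Fin.ext hij']
    · have hlt : (i : ℕ) < (j : ℕ) := lt_of_le_of_ne hij hij'
      by_cases hpj : p ≤ (j : ℕ) + 1
      · rw [htop j hpj]; exact hub i
      · exact le_of_lt (hstrict i j hlt (by omega))
  obtain ⟨N, idx, seq, h1, h2, h3, h4, h5⟩ :=
    path_aux r m hrm (∑ i, (a i - ((min (i : ℕ) m : ℕ) : ℤ))).toNat a hmono hlb hub
      (Int.self_le_toNat _)
  exact ⟨N, idx, seq, h1, h2, h3, h4, h5⟩
end
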